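/- arXiv:1709.04254 — 4 statements merged into one kernel-verified Lean document; each statement's English description precedes it below -/
import Mathlib

section
/- A real symmetric n×n matrix A (n ≥ 2) satisfies: A has nullity 1 and some kernel vector of A has all entries nonzero, if and only if det(A) = 0 and the adjugate adj(A) has no zero entries. -/
/-!
Since `adj A i j = det (A.updateRow j (Pi.single i 1))`, the entry `adj A i j` vanishes exactly
when some nonzero `w` with `w i = 0` is killed by every row of `A` except row `j`.

If `ker A = span {x}` and `y` is a left kernel vector with `y j ≠ 0`, then row `j` is a combination
of the other rows, so such a `w` lies in `ker A`, hence is a multiple of `x`; if moreover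
`x i ≠ 0` it is zero. For symmetric `A` one takes `y = x`.

Conversely, if `adj A i j ≠ 0` and `x` is a kernel vector with `x i ≠ 0`, then for any kernel
vector `w` the kernel vector `w - (w i / x i) • x` vanishes at `i`, hence is zero, so
`ker A = span {x}`. A column of `adj A` is such an `x` when `det A = 0`.
-/

open Matrix

namespace Matrix

variable {n : Type*} [Fintype n] [DecidableEq n]

theorem adjugate_apply_eq_zero_iff {R : Type*} [CommRing R] [IsDomain R] (A : Matrix n n R)
    (i j : n) : A.adjugate i j = 0 ↔ ∃ w ≠ 0, w i = 0 ∧ ∀ k ≠ j, (A *ᵥ w) k = 0 := by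
  rw [adjugate_apply, ← exists_mulVec_eq_zero_iff]
  refine exists_congr fun w => and_congr_right fun _ => ?_
  simp only [updateRow_mulVec, single_one_dotProduct, funext_iff, Function.update_apply,
    Pi.zero_apply]
  constructor
  · intro h
    exact ⟨by simpa using h j, fun k hk => by simpa [hk] using h k⟩
  · rintro ⟨hwi, hw⟩ k
    split_ifs with hk
    · exact hwi
    · exact hw k hk

variable {K : Type*} [Field K] {A : Matrix n n K} {x : n → K} {i j : n}

theorem adjugate_apply_ne_zero_of_ker_eq_span
    (hker : LinearMap.ker A.mulVecLin = Submodule.span K {x}) (hxi : x i ≠ 0) {y : n → K}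
    (hy : y ᵥ* A = 0) (hyj : y j ≠ 0) : A.adjugate i j ≠ 0 := by
  rw [Ne, adjugate_apply_eq_zero_iff]
  rintro ⟨w, hw0, hwi, hAw⟩
  have hAwj : (A *ᵥ w) j = 0 := by
    have hdot : y ⬝ᵥ (A *ᵥ w) = y j * (A *ᵥ w) j :=
      Finset.sum_eq_single j (fun k _ hk => by simp [hAw k hk]) (by simp)
    rw [dotProduct_mulVec, hy, zero_dotProduct] at hdot
    exact (mul_eq_zero.mp hdot.symm).resolve_left hyj
  have hw : w ∈ LinearMap.ker A.mulVecLin := by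
    ext k
    by_cases hk : k = j
    · subst hk; exact hAwj
    · exact hAw k hk
  obtain ⟨c, rfl⟩ := Submodule.mem_span_singleton.mp (hker ▸ hw)
  have hc : c = 0 := by simpa [hxi] using hwi
  simp [hc] at hw0

theorem ker_mulVecLin_eq_span_of_adjugate_apply_ne_zero (hAx : A *ᵥ x = 0) (hxi : x i ≠ 0)
    (hadj : A.adjugate i j ≠ 0) : LinearMap.ker A.mulVecLin = Submodule.span K {x} := by
  refine le_antisymm (fun w hw => ?_) ((Submodule.span_singleton_le_iff_mem _ _).mpr hAx)
  have hAw : A *ᵥ w = 0 := hw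
  have hv : w - (w i / x i) • x = 0 := by
    by_contra hv
    refine hadj ((adjugate_apply_eq_zero_iff A i j).mpr ⟨_, hv, ?_, fun k _ => ?_⟩)
    · simp [hxi]
    · simp [mulVec_sub, mulVec_smul, hAw, hAx]
  exact Submodule.mem_span_singleton.mpr ⟨w i / x i, (sub_eq_zero.mp hv).symm⟩

end Matrix

theorem stmt_4_general (n : ℕ) (A : Matrix (Fin n) (Fin n) ℝ) (hA : A.IsSymm) :
    (Module.finrank ℝ (LinearMap.ker A.mulVecLin) = 1 ∧
        ∃ x : Fin n → ℝ, A *ᵥ x = 0 ∧ ∀ i, x i ≠ 0) ↔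
      (A.det = 0 ∧ ∀ i j : Fin n, A.adjugate i j ≠ 0) := by
  constructor
  · rintro ⟨hker, x, hAx, hx⟩
    have hker_ne : LinearMap.ker A.mulVecLin ≠ ⊥ := fun h => by
      rw [h, finrank_bot] at hker
      exact zero_ne_one hker
    obtain ⟨v, -, hv0⟩ := Submodule.exists_mem_ne_zero_of_ne_bot hker_ne
    obtain ⟨i₀, -⟩ := Function.ne_iff.mp hv0
    have hx0 : x ≠ 0 := Function.ne_iff.mpr ⟨i₀, hx i₀⟩
    have hspan := eq_span_singleton_of_mem_of_finrank_eq_one hker hAx hx0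
    have hxA : x ᵥ* A = 0 := by rw [← mulVec_transpose, hA.eq, hAx]
    exact ⟨exists_mulVec_eq_zero_iff.mp ⟨x, hx0, hAx⟩,
      fun i j => adjugate_apply_ne_zero_of_ker_eq_span hspan (hx i) hxA (hx j)⟩
  · rintro ⟨hdet, hadj⟩
    obtain ⟨v, hv0, -⟩ := exists_mulVec_eq_zero_iff.mpr hdet
    obtain ⟨j, -⟩ := Function.ne_iff.mp hv0
    set x := cramer A (Pi.single j 1)
    have hx : ∀ i, x i = A.adjugate i j := fun i => by
      simp [x, cramer_eq_adjugate_mulVec]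
    have hAx : A *ᵥ x = 0 := by simp [x, mulVec_cramer, hdet]
    have hxj : x j ≠ 0 := hx j ▸ hadj j j
    rw [ker_mulVecLin_eq_span_of_adjugate_apply_ne_zero hAx hxj (hadj j j),
      finrank_span_singleton (Function.ne_iff.mpr ⟨j, hxj⟩)]
    exact ⟨rfl, x, hAx, fun i => hx i ▸ hadj i j⟩

/-- A real symmetric `n×n` matrix `A` (`n ≥ 2`) has nullity 1 together with a kernel
vector all of whose entries are nonzero, if and only if `det A = 0` and `adj A`
has no zero entries. -/
theorem stmt_4 (n : ℕ) (hn : 2 ≤ n) (A : Matrix (Fin n) (Fin n) ℝ) (hA : A.IsSymm) :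
    (Module.finrank ℝ (LinearMap.ker A.mulVecLin) = 1 ∧
        ∃ x : Fin n → ℝ, A *ᵥ x = 0 ∧ ∀ i, x i ≠ 0) ↔
      (A.det = 0 ∧ ∀ i j : Fin n, A.adjugate i j ≠ 0) :=
  stmt_4_general n A hA
end

section
/- Every n×n matrix with entries in {0,1} has absolute determinant at most 2·((n+1)/4)^((n+1)/2). -/
/-!
Bordering a `0-1` matrix `A` of order `n` by a row and a column of ones and replacing `A` by
`J - 2A` gives a `±1` matrix of order `n + 1`; subtracting its first row from the others shows
that its determinant is `(-2)ⁿ det A`. Hadamard's inequality bounds the determinant of a `±1`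
matrix of order `n + 1` by `(n + 1)^((n + 1)/2)`, and dividing by `2ⁿ` gives the bound.
-/

open Matrix Module

theorem Matrix.abs_det_le_prod_norm_row {m : ℕ} (M : Matrix (Fin m) (Fin m) ℝ) :
    |M.det| ≤ ∏ i, ‖WithLp.toLp 2 (M i)‖ := by
  let b := EuclideanSpace.basisFun (Fin m) ℝ
  have : Fact (finrank ℝ (EuclideanSpace ℝ (Fin m)) = m) := ⟨by simp⟩
  have hdet : b.toBasis.det (fun i ↦ WithLp.toLp 2 (M i)) = M.det := by
    rw [Basis.det_apply, ← det_transpose M]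
    congr 1
  rw [← hdet, ← b.toBasis.orientation.volumeForm_robust b rfl]
  exact b.toBasis.orientation.abs_volumeForm_apply_le _

theorem Matrix.abs_det_le_sqrt_pow {m : ℕ} (M : Matrix (Fin m) (Fin m) ℝ)
    (hM : ∀ i j, |M i j| ≤ 1) : |M.det| ≤ √m ^ m := by
  have hrow (i : Fin m) : ‖WithLp.toLp 2 (M i)‖ ≤ √m := by
    rw [EuclideanSpace.norm_eq]
    gcongr
    calc ∑ j, ‖M i j‖ ^ 2 ≤ ∑ _j : Fin m, (1 : ℝ) := by
          gcongr with j
          rw [Real.norm_eq_abs, sq_le_one_iff_abs_le_one, abs_abs]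
          exact hM i j
      _ = m := by simp
  calc |M.det| ≤ ∏ i, ‖WithLp.toLp 2 (M i)‖ := M.abs_det_le_prod_norm_row
    _ ≤ ∏ _i : Fin m, √m := Finset.prod_le_prod (fun _ _ ↦ norm_nonneg _) (fun i _ ↦ hrow i)
    _ = √m ^ m := by simp

/-- The `(n+1)×(n+1)` matrix `[[1, 1ᵀ], [1, J - 2A]]`, where `J` is the all-ones matrix. -/
def Matrix.borderedSignMatrix {R : Type*} [CommRing R] {n : ℕ} (A : Matrix (Fin n) (Fin n) R) :
    Matrix (Fin (n + 1)) (Fin (n + 1)) R :=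
  of (Fin.cons (fun _ ↦ 1) fun i ↦ Fin.cons 1 fun j ↦ 1 - 2 * A i j)

theorem Matrix.det_borderedSignMatrix {R : Type*} [CommRing R] {n : ℕ}
    (A : Matrix (Fin n) (Fin n) R) : A.borderedSignMatrix.det = (-2) ^ n * A.det := by
  let B : Matrix (Fin (n + 1)) (Fin (n + 1)) R :=
    of (Fin.cons (fun _ ↦ 1) fun i ↦ Fin.cons 0 fun j ↦ -2 * A i j)
  have hB : A.borderedSignMatrix.det = B.det := by
    refine det_eq_of_forall_row_eq_smul_add_const (Fin.cases 0 fun _ ↦ 1) 0 rfl ?_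
    intro i j
    refine Fin.cases ?_ (fun i ↦ ?_) i
    · simp [borderedSignMatrix, B]
    · refine Fin.cases ?_ (fun j ↦ ?_) j
      · simp [borderedSignMatrix, B]
      · simp [borderedSignMatrix, B]
        ring
  rw [hB, det_succ_column_zero, Fin.sum_univ_succ, Finset.sum_eq_zero]
  · have hsub : B.submatrix Fin.succ Fin.succ = (-2 : R) • A := by
      ext i j
      simp [B]
    simp only [Fin.succAbove_zero, hsub, det_smul]
    simp [B]
  · intro i _
    simp [B]

theorem Matrix.abs_borderedSignMatrix_apply {R : Type*} [CommRing R] [LinearOrder R]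
    [IsStrictOrderedRing R] {n : ℕ} {A : Matrix (Fin n) (Fin n) R}
    (hA : ∀ i j, A i j = 0 ∨ A i j = 1) (i j : Fin (n + 1)) :
    |A.borderedSignMatrix i j| = 1 := by
  refine Fin.cases ?_ (fun i ↦ ?_) i
  · simp [borderedSignMatrix]
  · refine Fin.cases ?_ (fun j ↦ ?_) j
    · simp [borderedSignMatrix]
    · rcases hA i j with h | h <;> norm_num [borderedSignMatrix, h]

theorem two_mul_div_four_rpow (n : ℕ) :
    2 * (((n : ℝ) + 1) / 4) ^ (((n : ℝ) + 1) / 2) = √((n : ℝ) + 1) ^ (n + 1) / 2 ^ n := by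
  have hx : (0 : ℝ) ≤ n + 1 := by positivity
  have hsqrt : ((n : ℝ) + 1) ^ (((n : ℝ) + 1) / 2) = √((n : ℝ) + 1) ^ (n + 1) := by
    rw [Real.sqrt_eq_rpow, ← Real.rpow_natCast, ← Real.rpow_mul hx]
    push_cast
    ring_nf
  have hfour : (4 : ℝ) ^ (((n : ℝ) + 1) / 2) = 2 ^ (n + 1) := by
    rw [show (4 : ℝ) = 2 ^ (2 : ℝ) by norm_num, ← Real.rpow_mul (by norm_num), ← Real.rpow_natCast]
    push_cast
    ring_nf
  rw [Real.div_rpow hx (by norm_num), hsqrt, hfour]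
  field_simp
  ring

/-- Hadamard-type bound: every `n×n` matrix with entries in `{0,1}` has absolute
determinant at most `2((n+1)/4)^((n+1)/2)`. -/
theorem stmt_9 (n : ℕ) (A : Matrix (Fin n) (Fin n) ℝ)
    (hA : ∀ i j, A i j = 0 ∨ A i j = 1) :
    |A.det| ≤ 2 * (((n : ℝ) + 1) / 4) ^ (((n : ℝ) + 1) / 2) := by
  have hB : |A.borderedSignMatrix.det| ≤ √((n : ℝ) + 1) ^ (n + 1) := by
    simpa using A.borderedSignMatrix.abs_det_le_sqrt_pow
      fun i j ↦ (abs_borderedSignMatrix_apply hA i j).le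
  rw [det_borderedSignMatrix, abs_mul, abs_pow, abs_neg, abs_two] at hB
  rw [two_mul_div_four_rpow, le_div_iff₀ (by positivity)]
  linarith
end

section
/- A nut graph is not bipartite. -/
open Matrix SimpleGraph

/-- A nut graph (a graph on at least 2 vertices whose adjacency matrix has nullity 1
and whose nonzero kernel vectors have no zero entries) is not bipartite, where
bipartite means the vertices can be partitioned into two independent sets. -/
theorem stmt_11 (V : Type) [Fintype V] [DecidableEq V] (G : SimpleGraph V)
    [DecidableRel G.Adj] (hcard : 2 ≤ Fintype.card V)
    (hnull : Module.finrank ℝ (LinearMap.ker (G.adjMatrix ℝ).mulVecLin) = 1)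
    (hfull : ∀ x : V → ℝ, G.adjMatrix ℝ *ᵥ x = 0 → x ≠ 0 → ∀ v, x v ≠ 0) :
    ¬ ∃ s : Set V, ∀ u v : V, G.Adj u v → (u ∈ s ↔ v ∉ s) := by
  classical
  rintro ⟨s, hs⟩
  by_cases hE : ∃ u v, G.Adj u v
  · -- get a nonzero kernel vector
    have hker : LinearMap.ker (G.adjMatrix ℝ).mulVecLin ≠ ⊥ := by
      intro h
      rw [h] at hnull
      simp at hnull
    obtain ⟨x, hx, hx0⟩ := Submodule.exists_mem_ne_zero_of_ne_bot hker
    rw [LinearMap.mem_ker, Matrix.mulVecLin_apply] at hx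
    have hxv := hfull x hx hx0
    obtain ⟨u₀, v₀, huv⟩ := hE
    have hxsum : ∀ u : V, ∑ v ∈ G.neighborFinset u, x v = 0 := by
      intro u
      have := congrFun hx u
      rwa [SimpleGraph.adjMatrix_mulVec_apply] at this
    set y : V → ℝ := fun v => if v ∈ s then x v else -x v with hy
    have hyker : G.adjMatrix ℝ *ᵥ y = 0 := by
      funext u
      rw [SimpleGraph.adjMatrix_mulVec_apply]
      by_cases hu : u ∈ s
      · have hcong : ∀ v ∈ G.neighborFinset u, y v = -x v := by
          intro v hv
          rw [SimpleGraph.mem_neighborFinset] at hv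
          have hv' : v ∉ s := (hs u v hv).mp hu
          simp [hy, hv']
        rw [Finset.sum_congr rfl hcong, Pi.zero_apply, Finset.sum_neg_distrib, hxsum u,
          neg_zero]
      · have hcong : ∀ v ∈ G.neighborFinset u, y v = x v := by
          intro v hv
          rw [SimpleGraph.mem_neighborFinset] at hv
          have hv' : v ∈ s := by
            by_contra hv2
            exact hu ((hs u v hv).mpr hv2)
          simp [hy, hv']
        rw [Finset.sum_congr rfl hcong, Pi.zero_apply, hxsum u]
    have hzker : G.adjMatrix ℝ *ᵥ (y - x) = 0 := by
      rw [Matrix.mulVec_sub, hyker, hx, sub_zero]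
    have hdiff : (u₀ ∈ s ∧ v₀ ∉ s) ∨ (u₀ ∉ s ∧ v₀ ∈ s) := by
      by_cases h : u₀ ∈ s
      · exact Or.inl ⟨h, (hs u₀ v₀ huv).mp h⟩
      · refine Or.inr ⟨h, ?_⟩
        by_contra h2
        exact h ((hs u₀ v₀ huv).mpr h2)
    have hz0 : y - x = 0 := by
      by_contra hz
      rcases hdiff with ⟨h1, h2⟩ | ⟨h1, h2⟩
      · have := hfull (y - x) hzker hz u₀
        apply this
        simp [hy, h1]
      · have := hfull (y - x) hzker hz v₀
        apply this
        simp [hy, h2]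
    have hyx : y = x := by
      have := sub_eq_zero.mp hz0
      exact this
    rcases hdiff with ⟨h1, h2⟩ | ⟨h1, h2⟩
    · have : y v₀ = -x v₀ := by simp [hy, h2]
      rw [hyx] at this
      have : x v₀ = 0 := by linarith
      exact hxv v₀ this
    · have : y u₀ = -x u₀ := by simp [hy, h1]
      rw [hyx] at this
      have : x u₀ = 0 := by linarith
      exact hxv u₀ this
  · -- edgeless case
    push_neg at hE
    obtain ⟨a, b, hab⟩ := Fintype.exists_pair_of_one_lt_card (α := V) (by omega)
    have hmul : G.adjMatrix ℝ *ᵥ (Pi.single a 1) = 0 := by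
      funext u
      rw [SimpleGraph.adjMatrix_mulVec_apply]
      have : G.neighborFinset u = ∅ := by
        ext v
        simp [SimpleGraph.mem_neighborFinset, hE u v]
      simp [this]
    have hne : (Pi.single a 1 : V → ℝ) ≠ 0 := by
      intro h
      have := congrFun h a
      simp at this
    have := hfull _ hmul hne b
    apply this
    simp [Pi.single_eq_of_ne (Ne.symm hab)]
end

section
/- Let G be a chemical nut graph (a nut graph with maximum degree at most 3) and let x be a kernel eigenvector of its adjacency matrix. Then the ratio r of the maximum to minimum absolute value of entries of x satisfies r ≥ 2 (equivalently r² ≥ 4). -/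
open Matrix SimpleGraph Finset

section Aux

variable {V : Type} [Fintype V] [DecidableEq V] (G : SimpleGraph V) [DecidableRel G.Adj]

/-- The neighbour of `b` other than `a`, in a graph where every vertex has degree 2. -/
private noncomputable def oth (a b : V) : V :=
  if h : ((G.neighborFinset b).erase a).Nonempty then h.choose else a

variable {G}

private lemma oth_mem (h2 : ∀ v, G.degree v = 2) (a b : V) :
    oth G a b ∈ (G.neighborFinset b).erase a := by
  have hne : ((G.neighborFinset b).erase a).Nonempty := by
    apply Finset.card_pos.mp
    have h1 : (G.neighborFinset b).card = 2 := h2 b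
    have := Finset.pred_card_le_card_erase (s := G.neighborFinset b) (a := a)
    omega
  rw [oth, dif_pos hne]
  exact hne.choose_spec

private lemma oth_ne (h2 : ∀ v, G.degree v = 2) (a b : V) : oth G a b ≠ a :=
  (Finset.mem_erase.mp (oth_mem h2 a b)).1

private lemma oth_adj (h2 : ∀ v, G.degree v = 2) (a b : V) : G.Adj b (oth G a b) :=
  (SimpleGraph.mem_neighborFinset _ _ _).mp (Finset.mem_erase.mp (oth_mem h2 a b)).2

private lemma nb_eq (h2 : ∀ v, G.degree v = 2) {a b : V} (hab : G.Adj b a) :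
    G.neighborFinset b = {a, oth G a b} := by
  have hsub : ({a, oth G a b} : Finset V) ⊆ G.neighborFinset b := by
    intro u hu
    rw [Finset.mem_insert, Finset.mem_singleton] at hu
    rcases hu with rfl | rfl
    · exact (SimpleGraph.mem_neighborFinset _ _ _).mpr hab
    · exact (SimpleGraph.mem_neighborFinset _ _ _).mpr (oth_adj h2 a b)
  have hcard : (G.neighborFinset b).card ≤ ({a, oth G a b} : Finset V).card := by
    rw [Finset.card_pair (Ne.symm (oth_ne h2 a b))]
    exact le_of_eq (h2 b)
  exact (Finset.eq_of_subset_of_card_le hsub hcard).symm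

private lemma oth_uniq (h2 : ∀ v, G.degree v = 2) {a b c : V} (hab : G.Adj b a)
    (hbc : G.Adj b c) (hca : c ≠ a) : c = oth G a b := by
  have hc : c ∈ G.neighborFinset b := (SimpleGraph.mem_neighborFinset _ _ _).mpr hbc
  rw [nb_eq h2 hab, Finset.mem_insert, Finset.mem_singleton] at hc
  tauto

private lemma ker_pair (h2 : ∀ v, G.degree v = 2) {x : V → ℝ}
    (hx : G.adjMatrix ℝ *ᵥ x = 0) {a b : V} (hab : G.Adj b a) :
    x a + x (oth G a b) = 0 := by
  have h0 : (G.adjMatrix ℝ *ᵥ x) b = 0 := by rw [hx]; rfl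
  rwa [adjMatrix_mulVec_apply, nb_eq h2 hab,
    Finset.sum_pair (Ne.symm (oth_ne h2 a b))] at h0

private noncomputable def wk (G : SimpleGraph V) [DecidableRel G.Adj] (v0 v1 : V) :
    ℕ → V × V
  | 0 => (v0, v1)
  | n + 1 => ((wk G v0 v1 n).2, oth G (wk G v0 v1 n).1 (wk G v0 v1 n).2)

variable {v0 v1 : V}

private lemma wk_zero : wk G v0 v1 0 = (v0, v1) := rfl

private lemma wk_succ (n : ℕ) :
    wk G v0 v1 (n + 1) =
      ((wk G v0 v1 n).2, oth G (wk G v0 v1 n).1 (wk G v0 v1 n).2) := rfl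

private lemma wk_adj (h2 : ∀ v, G.degree v = 2) (hv01 : G.Adj v0 v1) (n : ℕ) :
    G.Adj (wk G v0 v1 n).1 (wk G v0 v1 n).2 := by
  cases n with
  | zero => exact hv01
  | succ n => rw [wk_succ]; exact oth_adj h2 _ _

private lemma wk_back (h2 : ∀ v, G.degree v = 2) (hv01 : G.Adj v0 v1) {n m : ℕ}
    (h : wk G v0 v1 (n + 1) = wk G v0 v1 (m + 1)) : wk G v0 v1 n = wk G v0 v1 m := by
  rw [wk_succ, wk_succ, Prod.mk.injEq] at h
  obtain ⟨h1, h2'⟩ := h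
  have hadn := wk_adj h2 hv01 n
  have hadm := wk_adj h2 hv01 m
  have hm1 : (wk G v0 v1 m).1 ∈ G.neighborFinset (wk G v0 v1 n).2 := by
    rw [SimpleGraph.mem_neighborFinset _ _ _, h1]
    exact hadm.symm
  rw [nb_eq h2 hadn.symm, Finset.mem_insert, Finset.mem_singleton] at hm1
  have hne : (wk G v0 v1 m).1 ≠ oth G (wk G v0 v1 n).1 (wk G v0 v1 n).2 := by
    rw [h2']
    exact (oth_ne h2 _ _).symm
  exact Prod.ext ((hm1.resolve_right hne).symm) h1

private lemma wk_period (h2 : ∀ v, G.degree v = 2) (hv01 : G.Adj v0 v1) :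
    ∃ p, 1 ≤ p ∧ ∀ n, wk G v0 v1 (n + p) = wk G v0 v1 n := by
  have key : ∀ i j : ℕ, i < j → wk G v0 v1 i = wk G v0 v1 j →
      ∃ p, 1 ≤ p ∧ ∀ n, wk G v0 v1 (n + p) = wk G v0 v1 n := by
    intro i j hij hS
    have down : ∀ t, t ≤ i → wk G v0 v1 (i - t) = wk G v0 v1 (j - t) := by
      intro t
      induction t with
      | zero => intro _; simpa using hS
      | succ t ih =>
        intro ht
        have h' := ih (by omega)
        have e1 : i - t = (i - (t + 1)) + 1 := by omega
        have e2 : j - t = (j - (t + 1)) + 1 := by omega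
        rw [e1, e2] at h'
        exact wk_back h2 hv01 h'
    have h0 : wk G v0 v1 0 = wk G v0 v1 (j - i) := by
      have := down i (le_refl i)
      simpa using this
    refine ⟨j - i, by omega, ?_⟩
    intro n
    induction n with
    | zero => simpa using h0.symm
    | succ n ih =>
      have e : n + 1 + (j - i) = (n + (j - i)) + 1 := by omega
      rw [e, wk_succ, ih, ← wk_succ]
  obtain ⟨i, j, hij, hSij⟩ := Finite.exists_ne_map_eq_of_infinite (wk G v0 v1)
  rcases hij.lt_or_gt with h | h
  · exact key i j h hSij
  · exact key j i h hSij.symm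

private lemma wk_flip (h2 : ∀ v, G.degree v = 2) (hv01 : G.Adj v0 v1) {i j : ℕ}
    (h : wk G v0 v1 i = Prod.swap (wk G v0 v1 (j + 1))) :
    wk G v0 v1 (i + 1) = Prod.swap (wk G v0 v1 j) := by
  rw [wk_succ, Prod.swap_prod_mk] at h
  have h1 : (wk G v0 v1 i).1 = oth G (wk G v0 v1 j).1 (wk G v0 v1 j).2 := by rw [h]
  have h2' : (wk G v0 v1 i).2 = (wk G v0 v1 j).2 := by rw [h]
  have hadj := wk_adj h2 hv01 j
  have key : (wk G v0 v1 j).1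
      = oth G (oth G (wk G v0 v1 j).1 (wk G v0 v1 j).2) (wk G v0 v1 j).2 :=
    oth_uniq h2 (oth_adj h2 _ _) hadj.symm (Ne.symm (oth_ne h2 _ _))
  rw [wk_succ, h1, h2', ← key]
  rfl

private lemma wk_chain (h2 : ∀ v, G.degree v = 2) (hv01 : G.Adj v0 v1) :
    ∀ (t : ℕ) {n m : ℕ}, wk G v0 v1 n = Prod.swap (wk G v0 v1 m) → t ≤ m →
      wk G v0 v1 (n + t) = Prod.swap (wk G v0 v1 (m - t)) := by
  intro t
  induction t with
  | zero => intro n m h _; simpa using h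
  | succ t ih =>
    intro n m h ht
    have e : m = (m - 1) + 1 := by omega
    rw [e] at h
    have step := wk_flip h2 hv01 h
    have := ih step (by omega)
    have e1 : n + 1 + t = n + (t + 1) := by omega
    have e2 : m - 1 - t = m - (t + 1) := by omega
    rwa [e1, e2] at this

private lemma wk_noswap (h2 : ∀ v, G.degree v = 2) (hv01 : G.Adj v0 v1) (n m : ℕ) :
    wk G v0 v1 n ≠ Prod.swap (wk G v0 v1 m) := by
  intro h
  have hsym : wk G v0 v1 m = Prod.swap (wk G v0 v1 n) := by rw [h, Prod.swap_swap]
  have cov : ∀ i, i ≤ n + m → (n ≤ i ∨ m ≤ i) →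
      wk G v0 v1 i = Prod.swap (wk G v0 v1 (n + m - i)) := by
    intro i hi hni
    rcases hni with hni | hmi
    · have := wk_chain h2 hv01 (i - n) h (by omega)
      have e1 : n + (i - n) = i := by omega
      have e2 : m - (i - n) = n + m - i := by omega
      rwa [e1, e2] at this
    · have := wk_chain h2 hv01 (i - m) hsym (by omega)
      have e1 : m + (i - m) = i := by omega
      have e2 : n - (i - m) = n + m - i := by omega
      rwa [e1, e2] at this
  rcases Nat.even_or_odd (n + m) with ⟨q, hq⟩ | ⟨q, hq⟩
  · have hTq := cov q (by omega) (by omega)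
    have e : n + m - q = q := by omega
    rw [e] at hTq
    have h1 : (wk G v0 v1 q).1 = (wk G v0 v1 q).2 := by
      rw [Prod.ext_iff] at hTq
      simpa using hTq.1
    exact G.irrefl (h1 ▸ wk_adj h2 hv01 q)
  · have hTq := cov (q + 1) (by omega) (by omega)
    have e : n + m - (q + 1) = q := by omega
    rw [e] at hTq
    have h1 := congrArg Prod.snd hTq
    simp only [wk_succ, Prod.snd_swap] at h1
    exact oth_ne h2 _ _ h1

private lemma wk_wd (h2 : ∀ v, G.degree v = 2) (hv01 : G.Adj v0 v1) {n m : ℕ}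
    (h : (wk G v0 v1 n).1 = (wk G v0 v1 m).1) :
    (wk G v0 v1 n).2 = (wk G v0 v1 m).2 := by
  by_contra hne
  have key : ∀ a b : ℕ, (wk G v0 v1 a).1 = (wk G v0 v1 b).1 →
      (wk G v0 v1 a).2 ≠ (wk G v0 v1 b).2 → 1 ≤ a → False := by
    intro a b h1 h2ne ha
    obtain ⟨a', rfl⟩ : ∃ a', a = a' + 1 := ⟨a - 1, by omega⟩
    simp only [wk_succ] at h1 h2ne
    have hz := wk_adj h2 hv01 a'
    have hmem : (wk G v0 v1 b).2 ∈ G.neighborFinset (wk G v0 v1 a').2 := by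
      rw [SimpleGraph.mem_neighborFinset _ _ _, h1]
      exact wk_adj h2 hv01 b
    rw [nb_eq h2 hz.symm, Finset.mem_insert, Finset.mem_singleton] at hmem
    have hb2 : (wk G v0 v1 b).2 = (wk G v0 v1 a').1 :=
      hmem.resolve_right (fun hc => h2ne hc.symm)
    have hswap : wk G v0 v1 b = Prod.swap (wk G v0 v1 a') :=
      Prod.ext h1.symm hb2
    exact wk_noswap h2 hv01 b a' hswap
  rcases Nat.eq_zero_or_pos n with hn | hn
  · rcases Nat.eq_zero_or_pos m with hm | hm
    · exact hne (by rw [hn, hm])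
    · exact key m n h.symm (Ne.symm hne) hm
  · exact key n m h hne hn

private lemma wk_cover (h2 : ∀ v, G.degree v = 2) (hv01 : G.Adj v0 v1)
    (hconn : G.Connected) (v : V) : ∃ k, (wk G v0 v1 k).1 = v := by
  obtain ⟨p, hp1, hper⟩ := wk_period h2 hv01
  have step : ∀ u w : V, G.Adj u w →
      (∃ k, (wk G v0 v1 k).1 = u) → (∃ k, (wk G v0 v1 k).1 = w) := by
    rintro u w huw ⟨k, hk⟩
    have hk' : (wk G v0 v1 (k + p)).1 = u := by rw [hper k]; exact hk
    obtain ⟨a', ha'⟩ : ∃ a', k + p = a' + 1 := ⟨k + p - 1, by omega⟩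
    rw [ha'] at hk'
    simp only [wk_succ] at hk'
    have hz := wk_adj h2 hv01 a'
    have hmem : w ∈ G.neighborFinset (wk G v0 v1 a').2 := by
      rw [SimpleGraph.mem_neighborFinset _ _ _, hk']
      exact huw
    rw [nb_eq h2 hz.symm, Finset.mem_insert, Finset.mem_singleton] at hmem
    rcases hmem with hmem | hmem
    · exact ⟨a', hmem.symm⟩
    · refine ⟨a' + 2, ?_⟩
      simp only [show a' + 2 = (a' + 1) + 1 from rfl, wk_succ]
      exact hmem.symm
  have main : ∀ (u w : V) (q : G.Walk u w),
      (∃ k, (wk G v0 v1 k).1 = u) → (∃ k, (wk G v0 v1 k).1 = w) := by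
    intro u w q
    induction q with
    | nil => exact fun h => h
    | cons hadj q ih => exact fun hu => ih (step _ _ hadj hu)
  obtain ⟨q⟩ := hconn.preconnected v0 v
  exact main v0 v q ⟨0, rfl⟩

private lemma two_regular_contra [Nonempty V] (h2 : ∀ v, G.degree v = 2)
    (hconn : G.Connected)
    (hnull : Module.finrank ℝ (LinearMap.ker (G.adjMatrix ℝ).mulVecLin) = 1)
    {x : V → ℝ} (hx : G.adjMatrix ℝ *ᵥ x = 0) (hxs : ∀ v, x v ≠ 0) : False := by
  classical
  obtain ⟨v0⟩ := ‹Nonempty V›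
  obtain ⟨v1, hv01⟩ : ∃ v1, G.Adj v0 v1 := by
    rw [← degree_pos_iff_exists_adj, h2 v0]
    norm_num
  obtain ⟨p, hp1, hper⟩ := wk_period h2 hv01
  have cov1 : ∀ v, ∃ n, 1 ≤ n ∧ (wk G v0 v1 n).1 = v := by
    intro v
    obtain ⟨k, hk⟩ := wk_cover h2 hv01 hconn v
    exact ⟨k + p, by omega, by rw [hper k]; exact hk⟩
  choose idx hidx1 hidx using cov1
  set y : V → ℝ := fun v => x ((wk G v0 v1 (idx v)).2) with hy
  have yspec : ∀ (v : V) (n : ℕ), (wk G v0 v1 n).1 = v →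
      y v = x ((wk G v0 v1 n).2) := by
    intro v n hn
    have := wk_wd h2 hv01 (n := idx v) (m := n) (by rw [hidx v, hn])
    rw [hy]
    simp only
    rw [this]
  have kerS : ∀ n, x ((wk G v0 v1 n).1) + x ((wk G v0 v1 (n + 1)).2) = 0 := by
    intro n
    have hadj := wk_adj h2 hv01 n
    have := ker_pair h2 hx (a := (wk G v0 v1 n).1) (b := (wk G v0 v1 n).2) hadj.symm
    rw [wk_succ]
    exact this
  have hyk : G.adjMatrix ℝ *ᵥ y = 0 := by
    funext v
    obtain ⟨n, hn1, hnv⟩ : ∃ n, 1 ≤ n ∧ (wk G v0 v1 n).1 = v := ⟨idx v, hidx1 v, hidx v⟩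
    obtain ⟨a', rfl⟩ : ∃ a', n = a' + 1 := ⟨n - 1, by omega⟩
    simp only [wk_succ] at hnv
    have hz := wk_adj h2 hv01 a'
    have hnb : G.neighborFinset v = {(wk G v0 v1 a').1, (wk G v0 v1 (a' + 1)).2} := by
      rw [← hnv, wk_succ]
      exact nb_eq h2 hz.symm
    have hne : (wk G v0 v1 a').1 ≠ (wk G v0 v1 (a' + 1)).2 := by
      rw [wk_succ]
      exact (oth_ne h2 _ _).symm
    have e1 : y ((wk G v0 v1 a').1) = x ((wk G v0 v1 a').2) := yspec _ a' rfl
    have e2 : y ((wk G v0 v1 (a' + 1)).2) = x ((wk G v0 v1 (a' + 2)).2) := by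
      refine yspec _ (a' + 2) ?_
      simp only [show a' + 2 = (a' + 1) + 1 from rfl, wk_succ]
    have e3 := kerS (a' + 1)
    have e4 : (wk G v0 v1 (a' + 1)).1 = v := by rw [wk_succ]; exact hnv
    rw [e4, show a' + 1 + 1 = a' + 2 from rfl] at e3
    show (G.adjMatrix ℝ *ᵥ y) v = (0 : ℝ)
    rw [adjMatrix_mulVec_apply, hnb, Finset.sum_pair hne, e1, e2, hnv]
    linarith
  -- elements of the kernel
  have hxel : x ∈ LinearMap.ker (G.adjMatrix ℝ).mulVecLin := by
    rw [LinearMap.mem_ker, mulVecLin_apply]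
    exact hx
  have hyel : y ∈ LinearMap.ker (G.adjMatrix ℝ).mulVecLin := by
    rw [LinearMap.mem_ker, mulVecLin_apply]
    exact hyk
  have hxne : (⟨x, hxel⟩ : LinearMap.ker (G.adjMatrix ℝ).mulVecLin) ≠ 0 := by
    intro hc
    apply hxs v0
    have := congrArg Subtype.val hc
    exact congrFun this v0
  obtain ⟨c, hc⟩ := (finrank_eq_one_iff_of_nonzero'
    (⟨x, hxel⟩ : LinearMap.ker (G.adjMatrix ℝ).mulVecLin) hxne).mp hnull ⟨y, hyel⟩
  have hcy : ∀ v, c * x v = y v := by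
    intro v
    have := congrArg Subtype.val hc
    exact congrFun this v
  -- final contradiction
  set t := x ((wk G v0 v1 1).1) with ht
  set s := x ((wk G v0 v1 1).2) with hs
  have ea : c * t = s := by
    rw [ht, hs, hcy ((wk G v0 v1 1).1), yspec _ 1 rfl]
  have eb : c * s = -t := by
    have e2 : y ((wk G v0 v1 2).1) = x ((wk G v0 v1 2).2) := yspec _ 2 rfl
    have e4 : (wk G v0 v1 2).1 = (wk G v0 v1 1).2 := by
      simp only [show (2 : ℕ) = 1 + 1 from rfl, wk_succ]
    have e3 := kerS 1
    rw [e4] at e2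
    rw [hs, ht, hcy ((wk G v0 v1 1).2), e2]
    linarith
  have h5 : t * (c * c + 1) = 0 := by linear_combination c * ea + eb
  rcases mul_eq_zero.mp h5 with h6 | h6
  · exact hxs _ h6
  · nlinarith

private lemma tri {a b c m M : ℝ} (h : a + b + c = 0) (ha : a ≠ 0) (hb : b ≠ 0)
    (hc : c ≠ 0) (h1 : m ≤ |a|) (h2 : m ≤ |b|) (h3 : m ≤ |c|)
    (k1 : |a| ≤ M) (k2 : |b| ≤ M) (k3 : |c| ≤ M) : 2 * m ≤ M := by
  rcases ha.lt_or_gt with h₁ | h₁ <;> rcases hb.lt_or_gt with h₂ | h₂ <;>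
    rcases hc.lt_or_gt with h₃ | h₃ <;>
  · first
      | rw [abs_of_neg h₁] at h1 k1
      | rw [abs_of_pos h₁] at h1 k1
    first
      | rw [abs_of_neg h₂] at h2 k2
      | rw [abs_of_pos h₂] at h2 k2
    first
      | rw [abs_of_neg h₃] at h3 k3
      | rw [abs_of_pos h₃] at h3 k3
    linarith

end Aux

/-- For a chemical nut graph (connected, maximum degree ≤ 3) with kernel eigenvector
`x`, the ratio of the largest to the smallest absolute value of entries of `x` is
at least 2. -/
theorem stmt_15 (V : Type) [Fintype V] [DecidableEq V] [Nonempty V]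
    (G : SimpleGraph V) [DecidableRel G.Adj] (hcard : 2 ≤ Fintype.card V)
    (hconn : G.Connected) (hdeg : ∀ v : V, G.degree v ≤ 3)
    (hnull : Module.finrank ℝ (LinearMap.ker (G.adjMatrix ℝ).mulVecLin) = 1)
    (hfull : ∀ y : V → ℝ, G.adjMatrix ℝ *ᵥ y = 0 → y ≠ 0 → ∀ v, y v ≠ 0)
    (x : V → ℝ) (hx : G.adjMatrix ℝ *ᵥ x = 0) (hx0 : x ≠ 0) :
    2 * (Finset.univ.inf' Finset.univ_nonempty fun v => |x v|) ≤
      Finset.univ.sup' Finset.univ_nonempty fun v => |x v| := by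
  have hxs : ∀ v, x v ≠ 0 := hfull x hx hx0
  by_cases h3 : ∃ v, G.degree v = 3
  · obtain ⟨v, hv3⟩ := h3
    have hcard3 : (G.neighborFinset v).card = 3 := hv3
    obtain ⟨a, b, c, hab, hac, hbc, habc⟩ := Finset.card_eq_three.mp hcard3
    have h0 : x a + x b + x c = 0 := by
      have h0 : (G.adjMatrix ℝ *ᵥ x) v = 0 := by rw [hx]; rfl
      rw [adjMatrix_mulVec_apply, habc, Finset.sum_insert (by simp [hab, hac]),
        Finset.sum_pair hbc] at h0
      linarith
    exact tri h0 (hxs a) (hxs b) (hxs c)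
      (Finset.inf'_le (fun v => |x v|) (Finset.mem_univ a)) (Finset.inf'_le (fun v => |x v|) (Finset.mem_univ b))
      (Finset.inf'_le (fun v => |x v|) (Finset.mem_univ c))
      (Finset.le_sup' (fun v => |x v|) (Finset.mem_univ a)) (Finset.le_sup' (fun v => |x v|) (Finset.mem_univ b))
      (Finset.le_sup' (fun v => |x v|) (Finset.mem_univ c))
  · exfalso
    have h2 : ∀ v, G.degree v = 2 := by
      intro v
      have hle := hdeg v
      have hne3 : G.degree v ≠ 3 := fun hc => h3 ⟨v, hc⟩
      have hpos : 0 < G.degree v := by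
        rw [SimpleGraph.degree_pos_iff_exists_adj]
        obtain ⟨u, hu⟩ := Fintype.exists_ne_of_one_lt_card (by omega) v
        obtain ⟨w⟩ := hconn.preconnected v u
        cases w with
        | nil => exact absurd rfl hu
        | cons h q => exact ⟨_, h⟩
      have hne1 : G.degree v ≠ 1 := by
        intro h1
        have h1' : (G.neighborFinset v).card = 1 := h1
        obtain ⟨u, hu⟩ := Finset.card_eq_one.mp h1'
        have h0 : (G.adjMatrix ℝ *ᵥ x) v = 0 := by rw [hx]; rfl
        rw [adjMatrix_mulVec_apply, hu, Finset.sum_singleton] at h0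
        exact hxs u h0
      omega
    exact two_regular_contra h2 hconn hnull hx hxs
end
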